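/- An invalidation with sequence numbers at least as large as those stored never decreases destination sequence numbers: let rt be a routing table and dests a partial function IP ⇀ ℕ such that every (rip,rsn) ∈ dests satisfies sqn(rt,rip) ≤ rsn. Then for every destination dip ∈ IP, sqn(rt,dip) ≤ sqn(invalidate(rt,dests),dip). -/
import Mathlib


open Classical

noncomputable section

inductive K where
  | kno
  | unk
  deriving DecidableEq

inductive F where
  | val
  | inv
  deriving DecidableEq

/-- A routing table entry: destination, destination sequence number,
sequence-number-status flag, validity flag, hop count, next hop, precursors. -/
structure Entry (IP : Type) where
  dip : IP
  dsn : ℕ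
  dsk : K
  flag : F
  hops : ℕ
  nhip : IP
  pre : Set IP

variable {IP : Type}

/-- At most one entry per destination. -/
def isRT (rt : Set (Entry IP)) : Prop :=
  ∀ r ∈ rt, ∀ s ∈ rt, r.dip = s.dip → r = s

def kD (rt : Set (Entry IP)) : Set IP := {d | ∃ r ∈ rt, r.dip = d}

def vD (rt : Set (Entry IP)) : Set IP := {d | ∃ r ∈ rt, r.dip = d ∧ r.flag = F.val}

def iD (rt : Set (Entry IP)) : Set IP := {d | ∃ r ∈ rt, r.dip = d ∧ r.flag = F.inv}

/-- The entry of `rt` for destination `d`, when it exists. -/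
def sigmaRoute (rt : Set (Entry IP)) (d : IP) : Option (Entry IP) :=
  if h : ∃ r ∈ rt, r.dip = d then some h.choose else none

def sqn (rt : Set (Entry IP)) (d : IP) : ℕ :=
  ((sigmaRoute rt d).map Entry.dsn).getD 0

def flagRT (rt : Set (Entry IP)) (d : IP) : Option F :=
  (sigmaRoute rt d).map Entry.flag

def dhops (rt : Set (Entry IP)) (d : IP) : ℕ :=
  ((sigmaRoute rt d).map Entry.hops).getD 0

/-- Net sequence number of an entry. -/
def nsqnE (r : Entry IP) : ℕ :=
  if r.flag = F.val ∨ r.dsn = 0 then r.dsn else r.dsn - 1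

def nsqn (rt : Set (Entry IP)) (d : IP) : ℕ :=
  ((sigmaRoute rt d).map nsqnE).getD 0

def inc (n : ℕ) : ℕ := if n = 0 then 0 else n + 1

/-- The quality preorder `rt ⊑_d rt'`. -/
def rtLe (d : IP) (rt rt' : Set (Entry IP)) : Prop :=
  nsqn rt d < nsqn rt' d ∨ (nsqn rt d = nsqn rt' d ∧ dhops rt d ≥ dhops rt' d)

/-- The quality equivalence `rt ≈_d rt'`. -/
def rtEquiv (d : IP) (rt rt' : Set (Entry IP)) : Prop :=
  rtLe d rt rt' ∧ rtLe d rt' rt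

/-- The strict quality order `rt ⊏_d rt'`. -/
def rtLt (d : IP) (rt rt' : Set (Entry IP)) : Prop :=
  rtLe d rt rt' ∧ ¬ rtEquiv d rt rt'

/-- Add precursors to an entry. -/
def addpre (r : Entry IP) (npre : Set IP) : Entry IP := { r with pre := r.pre ∪ npre }

/-- Preconditions of `update`. -/
def updPre (r : Entry IP) : Prop :=
  r.flag = F.val ∧ (r.dsn = 0 ↔ r.dsk = K.unk) ∧ (r.dsk = K.unk → r.hops = 1)

/-- The update function on routing tables. -/
def update (rt : Set (Entry IP)) (r : Entry IP) : Set (Entry IP) :=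
  if h : ∃ s ∈ rt, s.dip = r.dip then
    let s := h.choose
    let nrt := rt \ {s}
    let nr := addpre r s.pre
    let nr' := { nr with dsn := s.dsn }
    let ns := addpre s r.pre
    if sqn rt r.dip < r.dsn ∨ (sqn rt r.dip = r.dsn ∧ dhops rt r.dip > r.hops)
        ∨ (sqn rt r.dip = r.dsn ∧ flagRT rt r.dip = some F.inv) then
      nrt ∪ {nr}
    else if r.dsk = K.unk then nrt ∪ {nr'}
    else nrt ∪ {ns}
  else rt ∪ {r}

/-- `dests` is a partial function IP ⇀ ℕ. -/
def isPartialFn (dests : Set (IP × ℕ)) : Prop :=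
  ∀ p ∈ dests, ∀ q ∈ dests, p.1 = q.1 → p.2 = q.2

/-- The invalidate function on routing tables. -/
def invalidate (rt : Set (Entry IP)) (dests : Set (IP × ℕ)) : Set (Entry IP) :=
  (fun r => if h : ∃ rsn, (r.dip, rsn) ∈ dests then
      { r with dsn := h.choose, flag := F.inv } else r) '' rt

/-- Adding precursors to the entry for a given destination. -/
def addprecRT (rt : Set (Entry IP)) (d : IP) (npre : Set IP) : Set (Entry IP) :=
  if h : ∃ s ∈ rt, s.dip = d then (rt \ {h.choose}) ∪ {addpre h.choose npre} else rt

theorem sqn_eq_of_mem {IP : Type} {rt : Set (Entry IP)} (hrt : isRT rt)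
    {r : Entry IP} (hr : r ∈ rt) {d : IP} (hd : r.dip = d) :
    sqn rt d = r.dsn := by
  have h : ∃ s ∈ rt, s.dip = d := ⟨r, hr, hd⟩
  have hc := h.choose_spec
  have : h.choose = r := hrt _ hc.1 _ hr (hc.2.trans hd.symm)
  simp [sqn, sigmaRoute, dif_pos h, this]

/-- An invalidation with sequence numbers at least as large as those stored never
decreases destination sequence numbers. -/
theorem invalidate_sqn_mono (IP : Type) (rt : Set (Entry IP)) (hrt : isRT rt)
    (dests : Set (IP × ℕ)) (hpf : isPartialFn dests)
    (hdests : ∀ p ∈ dests, sqn rt p.1 ≤ p.2) (dip : IP) :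
    sqn rt dip ≤ sqn (invalidate rt dests) dip := by
  by_cases h : ∃ r ∈ rt, r.dip = dip
  · obtain ⟨r, hr, hd⟩ := h
    set f : Entry IP → Entry IP := fun r =>
      if h : ∃ rsn, (r.dip, rsn) ∈ dests then
        { r with dsn := h.choose, flag := F.inv } else r with hf
    have hfdip : ∀ s, (f s).dip = s.dip := by
      intro s; by_cases hs : ∃ rsn, (s.dip, rsn) ∈ dests <;> simp [hf, hs]
    have hmem : f r ∈ invalidate rt dests := ⟨r, hr, rfl⟩
    have hsqn1 : sqn rt dip = r.dsn := sqn_eq_of_mem hrt hr hd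
    have hinvRT : isRT (invalidate rt dests) := by
      rintro _ ⟨a, ha, rfl⟩ _ ⟨b, hb, rfl⟩ hab
      rw [hfdip, hfdip] at hab
      rw [hrt _ ha _ hb hab]
    have hsqn2 : sqn (invalidate rt dests) dip = (f r).dsn :=
      sqn_eq_of_mem hinvRT hmem ((hfdip r).trans hd)
    rw [hsqn1, hsqn2]
    by_cases hs : ∃ rsn, (r.dip, rsn) ∈ dests
    · have := hdests _ hs.choose_spec
      simp only [hf, dif_pos hs]
      calc r.dsn = sqn rt r.dip := (sqn_eq_of_mem hrt hr rfl).symm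
        _ ≤ hs.choose := this
    · simp [hf, hs]
  · simp [sqn, sigmaRoute, dif_neg h]

end
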